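/- arXiv:1503.05739 — 3 statements merged into one kernel-verified Lean document; each statement's English description precedes it below -/
import Mathlib

section
/- Let P ⊂ ℝ⁵ be a 5-dimensional reflexive polytope with δ-vector (1, δ_1, δ_2, δ_2, δ_1, 1). Then P is a CL-polytope if and only if either (i) δ_1 = 237 and δ_2 = 1682, or (ii) δ_2 < 7δ_1 + 23, 71δ_1 ≤ 9δ_2 + 1689, and 41(δ_1 + 9δ_2 − 9)² ≤ 2(41δ_1 + 96)² + 2(41δ_2 − 85)². In particular, if P is a CL-polytope then δ_1 ≤ 237 and δ_2 ≤ 1682. -/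
open Pointwise MeasureTheory Polynomial

noncomputable section

/-- The lattice points of a subset `S ⊆ ℝ^d`: integer vectors whose real cast lies in `S`. -/
def latticePts (d : ℕ) (S : Set (Fin d → ℝ)) : Set (Fin d → ℤ) :=
  {x | (fun i => (x i : ℝ)) ∈ S}

/-- `P ⊆ ℝ^d` is a lattice polytope: the convex hull of finitely many integer points. -/
def IsLatticePolytope (d : ℕ) (P : Set (Fin d → ℝ)) : Prop :=
  ∃ V : Finset (Fin d → ℤ),
    P = convexHull ℝ ((fun v : Fin d → ℤ => fun i => (v i : ℝ)) '' (V : Set (Fin d → ℤ)))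

/-- `P` is full-dimensional in `ℝ^d`. -/
def IsFullDim (d : ℕ) (P : Set (Fin d → ℝ)) : Prop :=
  affineSpan ℝ P = ⊤

/-- `L` is the Ehrhart polynomial of `P`: `L(m) = |mP ∩ ℤ^d|` for every natural number `m`. -/
def IsEhrhart (d : ℕ) (P : Set (Fin d → ℝ)) (L : Polynomial ℚ) : Prop :=
  ∀ m : ℕ, L.eval (m : ℚ) = ((latticePts d ((m : ℝ) • P)).ncard : ℚ)

/-- The complex roots of a rational polynomial, counted with multiplicity. -/
def cRoots (L : Polynomial ℚ) : Multiset ℂ :=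
  (L.map (algebraMap ℚ ℂ)).roots

/-- `L` is a CL-polynomial: every complex root has real part `-1/2`. -/
def IsCL (L : Polynomial ℚ) : Prop :=
  ∀ z ∈ cRoots L, z.re = -(1/2 : ℝ)

/-- `L` has only real roots: every complex root has imaginary part `0`. -/
def IsRealRooted (L : Polynomial ℚ) : Prop :=
  ∀ z ∈ cRoots L, z.im = 0

/-- The dual (polar) body `{u : ⟨u,v⟩ ≥ -1 for all v ∈ P}`. -/
def dualBody (d : ℕ) (P : Set (Fin d → ℝ)) : Set (Fin d → ℝ) :=
  {u | ∀ v ∈ P, -1 ≤ ∑ i, u i * v i}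

/-- `P` is reflexive: the origin is interior and the dual body is a lattice polytope. -/
def IsReflexive (d : ℕ) (P : Set (Fin d → ℝ)) : Prop :=
  (0 : Fin d → ℝ) ∈ interior P ∧ IsLatticePolytope d (dualBody d P)

/-- The Euclidean volume of `P ⊆ ℝ^d`. -/
def vol (d : ℕ) (P : Set (Fin d → ℝ)) : ℝ :=
  (volume P).toReal

/-- `δ` is the δ-vector of the Ehrhart polynomial `L` in dimension `d`:
`L(m) = ∑_{j=0}^d δ_j C(d+m-j, d)` for all natural numbers `m`. -/
def HasDeltaVector (d : ℕ) (L : Polynomial ℚ) (δ : Fin (d+1) → ℤ) : Prop :=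
  ∀ m : ℕ, L.eval (m : ℚ) = ∑ j : Fin (d+1), (δ j : ℚ) * (Nat.choose (d + m - (j : ℕ)) d : ℚ)

/-- The discriminant `B²C² − 4AC³ − 4B³D − 27A²D² + 18ABCD` of the cubic `Az³+Bz²+Cz+D`. -/
def cubicDisc (A B C D : ℚ) : ℚ :=
  B^2*C^2 - 4*A*C^3 - 4*B^3*D - 27*A^2*D^2 + 18*A*B*C*D


set_option maxHeartbeats 1000000 in
private lemma aux_ch1 (n : ℕ) : ((n.choose 1 : ℚ)) = n := by simp

private lemma aux_ch2 (n : ℕ) : ((n.choose 2 : ℚ)) * 2 = n * (n - 1) := by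
  induction n with
  | zero => norm_num
  | succ k ih =>
    rw [Nat.choose_succ_succ]
    push_cast
    push_cast at ih
    linear_combination ih + 2 * aux_ch1 k

private lemma aux_ch3 (n : ℕ) : ((n.choose 3 : ℚ)) * 6 = n * (n - 1) * (n - 2) := by
  induction n with
  | zero => norm_num
  | succ k ih =>
    rw [Nat.choose_succ_succ]
    push_cast
    push_cast at ih
    linear_combination ih + 3 * aux_ch2 k

private lemma aux_ch4 (n : ℕ) : ((n.choose 4 : ℚ)) * 24 = n * (n - 1) * (n - 2) * (n - 3) := by
  induction n with
  | zero => norm_num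
  | succ k ih =>
    rw [Nat.choose_succ_succ]
    push_cast
    push_cast at ih
    linear_combination ih + 4 * aux_ch3 k

private lemma aux_ch5 (n : ℕ) :
    ((n.choose 5 : ℚ)) * 120 = n * (n - 1) * (n - 2) * (n - 3) * (n - 4) := by
  induction n with
  | zero => norm_num
  | succ k ih =>
    rw [Nat.choose_succ_succ]
    push_cast
    push_cast at ih
    linear_combination ih + 5 * aux_ch4 k

/-- The explicit Ehrhart polynomial with palindromic δ-vector `(1, δ1, δ2, δ2, δ1, 1)`. -/
noncomputable def ehrQ (δ1 δ2 : ℤ) : Polynomial ℚ :=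
  C 1 + C (((2384 + 144*δ1 - 16*δ2 : ℤ) : ℚ) / 960) * X
    + C (((1400 + 440*δ1 - 40*δ2 : ℤ) : ℚ) / 960) * X^2
    + C (((960 + 320*δ1 : ℤ) : ℚ) / 960) * X^3
    + C (((40 + 40*δ1 + 40*δ2 : ℤ) : ℚ) / 960) * X^4
    + C (((16 + 16*δ1 + 16*δ2 : ℤ) : ℚ) / 960) * X^5

private lemma LeqQ (L : Polynomial ℚ) (δ1 δ2 : ℤ)
    (hδ : HasDeltaVector 5 L ![1, δ1, δ2, δ2, δ1, 1]) :
    L = ehrQ δ1 δ2 := by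
  have key : ∀ m : ℕ, L.eval (m : ℚ) = (ehrQ δ1 δ2).eval (m : ℚ) := by
    intro m
    rw [hδ m, Fin.sum_univ_six]
    simp only [Matrix.cons_val_zero, Matrix.cons_val_one, Matrix.head_cons, Fin.val_zero,
      Fin.val_one, Matrix.cons_val_two, Matrix.tail_cons, Matrix.cons_val_three,
      Matrix.cons_val_four, Matrix.cons_val_fin_one, Fin.val_two,
      show ((3:Fin 6):ℕ) = 3 from rfl, show ((4:Fin 6):ℕ) = 4 from rfl,
      show ((5:Fin 6):ℕ) = 5 from rfl,
      show (![1, δ1, δ2, δ2, δ1, 1] 3) = δ2 from rfl,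
      show (![1, δ1, δ2, δ2, δ1, 1] 4) = δ1 from rfl,
      show (![(1:ℤ), δ1, δ2, δ2, δ1, 1] 5) = 1 from rfl]
    have e0 : 5 + m - 0 = m + 5 := by omega
    have e1 : 5 + m - 1 = m + 4 := by omega
    have e2 : 5 + m - 2 = m + 3 := by omega
    have e3 : 5 + m - 3 = m + 2 := by omega
    have e4 : 5 + m - 4 = m + 1 := by omega
    have e5 : 5 + m - 5 = m := by omega
    rw [e0, e1, e2, e3, e4, e5]
    have h0 := aux_ch5 (m+5); have h1 := aux_ch5 (m+4); have h2 := aux_ch5 (m+3)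
    have h3 := aux_ch5 (m+2); have h4 := aux_ch5 (m+1); have h5 := aux_ch5 m
    simp only [ehrQ, eval_add, eval_mul, eval_pow, eval_C, eval_X]
    push_cast at h0 h1 h2 h3 h4 h5 ⊢
    linear_combination (h0 + (δ1:ℚ)*h1 + (δ2:ℚ)*h2 + (δ2:ℚ)*h3 + (δ1:ℚ)*h4 + h5)/120
  have hroots : {x : ℚ | (L - ehrQ δ1 δ2).IsRoot x}.Infinite := by
    apply (Set.infinite_range_of_injective
      (Nat.cast_injective : Function.Injective (Nat.cast : ℕ → ℚ))).mono
    rintro x ⟨m, rfl⟩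
    simp [Polynomial.IsRoot, key m]
  have h := Polynomial.eq_zero_of_infinite_isRoot _ hroots
  exact sub_eq_zero.mp h

private lemma Qeval (δ1 δ2 : ℤ) (x : ℚ) : 1920 * (ehrQ δ1 δ2).eval x =
    ((1+δ1+δ2 : ℤ):ℚ)*(2*x+1)^5 + 10*((23+7*δ1-δ2:ℤ):ℚ)*(2*x+1)^3
      + ((1689-71*δ1+9*δ2:ℤ):ℚ)*(2*x+1) := by
  simp only [ehrQ, eval_add, eval_mul, eval_pow, eval_C, eval_X, eval_one]
  push_cast
  ring

private lemma QevalC (δ1 δ2 : ℤ) (z : ℂ) :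
    1920 * ((ehrQ δ1 δ2).map (algebraMap ℚ ℂ)).eval z =
    ((1+δ1+δ2 : ℤ):ℂ)*(2*z+1)^5 + 10*((23+7*δ1-δ2:ℤ):ℂ)*(2*z+1)^3
      + ((1689-71*δ1+9*δ2:ℤ):ℂ)*(2*z+1) := by
  rw [Polynomial.eval_map]
  simp only [ehrQ, eval₂_add, eval₂_mul, eval₂_pow, eval₂_C, eval₂_X, eval₂_one]
  have hmap : ∀ q : ℚ, algebraMap ℚ ℂ q = (q : ℂ) := fun q => eq_ratCast _ q
  simp only [hmap]
  push_cast
  ring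

private lemma lattice_finite (S : Set (Fin 5 → ℝ)) (R : ℝ) (hS : ∀ y ∈ S, ‖y‖ ≤ R) :
    (latticePts 5 S).Finite := by
  have hsub : latticePts 5 S ⊆ Set.pi Set.univ (fun _ : Fin 5 => Set.Icc (-⌈R⌉) ⌈R⌉) := by
    intro x hx i _
    have hy : ‖(fun i => (x i : ℝ))‖ ≤ R := hS _ hx
    have h2 : |(x i : ℝ)| ≤ R :=
      le_trans (by simpa using norm_le_pi_norm (fun i => (x i : ℝ)) i) hy
    rw [abs_le] at h2
    constructor
    · have : ((-⌈R⌉ : ℤ) : ℝ) ≤ (x i : ℝ) := by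
        push_cast
        linarith [Int.le_ceil R]
      exact_mod_cast this
    · have : ((x i : ℤ) : ℝ) ≤ ((⌈R⌉ : ℤ) : ℝ) := le_trans h2.2 (Int.le_ceil R)
      exact_mod_cast this
  exact (Set.Finite.pi (fun _ => Set.finite_Icc _ _)).subset hsub

set_option maxHeartbeats 1000000 in
private lemma a0_pos (P : Set (Fin 5 → ℝ)) (L : Polynomial ℚ) (δ1 δ2 : ℤ)
    (hP : IsLatticePolytope 5 P) (h0 : (0 : Fin 5 → ℝ) ∈ interior P)
    (hL : IsEhrhart 5 P L) (hQ : L = ehrQ δ1 δ2) : 0 < 1 + δ1 + δ2 := by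
  by_contra hneg
  push_neg at hneg
  obtain ⟨V, hV⟩ := hP
  have hcomp : IsCompact P := by
    rw [hV]; exact ((V.finite_toSet).image _).isCompact_convexHull ℝ
  obtain ⟨R, hR⟩ := (Metric.isBounded_iff_subset_closedBall 0).mp hcomp.isBounded
  obtain ⟨ε, hε, hball⟩ := Metric.mem_nhds_iff.mp (mem_interior_iff_mem_nhds.mp h0)
  obtain ⟨K, hK⟩ := exists_nat_gt (1/ε)
  have hKε : 1 < (K : ℝ) * ε := by
    rw [div_lt_iff₀ hε] at hK; linarith
  have hK0 : 0 < K := by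
    by_contra h
    push_neg at h
    interval_cases K
    simp at hKε
    linarith
  have count : ∀ n : ℕ, ((n+1)^5 : ℚ) ≤ L.eval ((K*(n+1) : ℕ) : ℚ) := by
    intro n
    set m : ℕ := K*(n+1) with hm
    have hm0 : 0 < m := by positivity
    have hmR : (0:ℝ) < (m:ℝ) := by exact_mod_cast hm0
    rw [hL m]
    set g : (Fin 5 → Fin (n+1)) → (Fin 5 → ℤ) := fun y i => ((y i : ℕ) : ℤ) with hg
    have hginj : Function.Injective g := by
      intro y1 y2 h
      funext i
      have := congrFun h i
      simp only [hg] at this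
      exact Fin.ext (by exact_mod_cast this)
    have hsub : Set.range g ⊆ latticePts 5 ((m:ℝ) • P) := by
      rintro x ⟨y, rfl⟩
      show (fun i => ((g y i : ℤ) : ℝ)) ∈ (m:ℝ) • P
      rw [Set.mem_smul_set_iff_inv_smul_mem₀ (ne_of_gt hmR)]
      apply hball
      rw [Metric.mem_ball, dist_zero_right]
      rw [pi_norm_lt_iff hε]
      intro i
      have hyi : ((y i : ℕ) : ℝ) ≤ n := by
        have := Fin.is_le (y i)
        exact_mod_cast this
      have hnm : (n : ℝ) < ε * m := by
        have h2 : ((n:ℝ)+1) * 1 < ((n:ℝ)+1) * ((K:ℝ)*ε) := by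
          apply mul_lt_mul_of_pos_left hKε (by positivity)
        push_cast [hm]
        nlinarith [h2]
      show ‖(m:ℝ)⁻¹ • (fun i => ((g y i : ℤ) : ℝ)) i‖ < ε
      simp only [Pi.smul_apply, smul_eq_mul, hg]
      rw [Real.norm_eq_abs, abs_of_nonneg (by positivity)]
      rw [inv_mul_eq_div, div_lt_iff₀ hmR]
      push_cast
      nlinarith
    have hfin : (latticePts 5 ((m:ℝ) • P)).Finite := by
      apply lattice_finite _ ((m:ℝ) * |R|)
      rintro y ⟨p, hp, rfl⟩
      rw [norm_smul]
      have : ‖p‖ ≤ |R| := le_trans (mem_closedBall_zero_iff.mp (hR hp)) (le_abs_self R)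
      simp only [Real.norm_eq_abs, abs_of_nonneg hmR.le]
      exact mul_le_mul_of_nonneg_left this hmR.le
    have hcard : (Set.range g).ncard = (n+1)^5 := by
      have h1 := Nat.card_range_of_injective hginj
      rw [Nat.card_coe_set_eq] at h1
      rw [h1, Nat.card_eq_fintype_card]
      simp
    have hle := Set.ncard_le_ncard hsub hfin
    rw [hcard] at hle
    exact_mod_cast hle
  set M : ℕ := (10 * (23+7*δ1-δ2).natAbs + (1689-71*δ1+9*δ2).natAbs) * 27 * K^3 + 1 with hM
  have hcount := count M
  have hkey := Qeval δ1 δ2 ((K*(M+1) : ℕ) : ℚ)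
  rw [← hQ] at hkey
  set Kq : ℚ := (K : ℚ) with hKq
  set N : ℚ := (M : ℚ) + 1 with hN
  have hN1 : (1:ℚ) ≤ N := by
    have : (0:ℚ) ≤ (M:ℚ) := by positivity
    rw [hN]; linarith
  have hKq1 : (1:ℚ) ≤ Kq := by
    rw [hKq]; exact_mod_cast hK0
  have hcast : ((K*(M+1) : ℕ) : ℚ) = Kq * N := by push_cast [hN, hKq]; ring
  rw [hcast] at hkey
  set s : ℚ := 2 * (Kq * N) + 1 with hs
  have hs1 : (1:ℚ) ≤ s := by nlinarith
  have hs3 : s ≤ 3 * (Kq * N) := by nlinarith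
  set aq : ℚ := ((1+δ1+δ2 : ℤ):ℚ) with haq
  set bq : ℚ := ((23+7*δ1-δ2 : ℤ):ℚ) with hbq
  set cq : ℚ := ((1689-71*δ1+9*δ2 : ℤ):ℚ) with hcq
  set Bq : ℚ := ((23+7*δ1-δ2).natAbs : ℚ) with hBq
  set Cq : ℚ := ((1689-71*δ1+9*δ2).natAbs : ℚ) with hCq
  have haq0 : aq ≤ 0 := by rw [haq]; exact_mod_cast hneg
  have hbB : bq ≤ Bq := by
    rw [hbq, hBq]; push_cast [Nat.cast_natAbs]; exact le_abs_self _
  have hcC : cq ≤ Cq := by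
    rw [hcq, hCq]; push_cast [Nat.cast_natAbs]; exact le_abs_self _
  have hB0 : 0 ≤ Bq := by rw [hBq]; positivity
  have hC0 : 0 ≤ Cq := by rw [hCq]; positivity
  rw [hcast] at hcount
  have hlow : 1920 * N^5 ≤ aq * s^5 + 10 * bq * s^3 + cq * s := by
    linarith [hcount, hkey]
  have h2 : aq * s^5 ≤ 0 := mul_nonpos_of_nonpos_of_nonneg haq0 (by positivity)
  have hs0 : (0:ℚ) ≤ s := by linarith
  have hs30 : (0:ℚ) ≤ s^3 := by positivity
  have h3 : 10 * bq * s^3 + cq * s ≤ (10 * Bq + Cq) * s^3 := by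
    have hss : s ≤ s^3 := by
      nlinarith [mul_nonneg (mul_nonneg hs0 (show (0:ℚ) ≤ s - 1 by linarith))
        (show (0:ℚ) ≤ s + 1 by linarith)]
    have hcs : cq * s ≤ Cq * s^3 :=
      le_trans (mul_le_mul_of_nonneg_right hcC hs0) (mul_le_mul_of_nonneg_left hss hC0)
    have hbs : 10 * bq * s^3 ≤ 10 * Bq * s^3 :=
      mul_le_mul_of_nonneg_right (by linarith) hs30
    linarith
  have h5 : (10 * Bq + Cq) * s^3 ≤ (10 * Bq + Cq) * 27 * (Kq*N)^3 := by
    have h51 : s^3 ≤ 27 * (Kq*N)^3 := by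
      have := pow_le_pow_left₀ hs0 hs3 3
      have hring : (3 * (Kq*N))^3 = 27 * (Kq*N)^3 := by ring
      linarith [this, hring.le, hring.ge]
    calc (10 * Bq + Cq) * s^3 ≤ (10 * Bq + Cq) * (27 * (Kq*N)^3) :=
          mul_le_mul_of_nonneg_left h51 (by linarith)
      _ = (10 * Bq + Cq) * 27 * (Kq*N)^3 := by ring
  have h6 : (10 * Bq + Cq) * 27 * Kq^3 + 2 = N := by
    rw [hN, hM, hBq, hCq, hKq]; push_cast; ring
  have hN30 : (0:ℚ) ≤ N^3 := by positivity
  have hKN : (10 * Bq + Cq) * 27 * (Kq*N)^3 ≤ (N - 1) * N^3 := by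
    have h7 : (10 * Bq + Cq) * 27 * Kq^3 = N - 2 := by linarith [h6]
    have e : (10 * Bq + Cq) * 27 * (Kq*N)^3 = (N - 2) * N^3 := by
      calc (10 * Bq + Cq) * 27 * (Kq*N)^3 = ((10 * Bq + Cq) * 27 * Kq^3) * N^3 := by ring
        _ = (N - 2) * N^3 := by rw [h7]
    rw [e]
    nlinarith [hN30]
  have hfin : 1920 * N^5 ≤ (N - 1) * N^3 := by linarith
  have hN0 : (0:ℚ) < N := by linarith
  have e1 : (N-1)*N^3 < N^4 := by nlinarith [pow_pos hN0 3]
  have e2 : N^4 ≤ N^5 := by nlinarith [pow_pos hN0 4]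
  have e3 : N^5 ≤ 1920*N^5 := by nlinarith [pow_pos hN0 5]
  linarith

private lemma key_quartic (ar br cr : ℝ) (ha : 0 < ar) (hb : 0 ≤ br) (hc : 0 ≤ cr)
    (hd : ar*cr ≤ 25*br^2) (s : ℂ)
    (heq : (ar:ℂ)*s^4 + 10*(br:ℂ)*s^2 + (cr:ℂ) = 0) : s.re = 0 := by
  set x := s.re with hx
  set y := s.im with hy
  have heq' : (ar:ℂ)*((s*s)*(s*s)) + 10*(br:ℂ)*(s*s) + (cr:ℂ) = 0 := by
    linear_combination heq
  have hre := congrArg Complex.re heq'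
  have him := congrArg Complex.im heq'
  simp only [Complex.add_re, Complex.add_im, Complex.mul_re, Complex.mul_im,
    Complex.ofReal_re, Complex.ofReal_im, Complex.re_ofNat, Complex.im_ofNat,
    Complex.zero_re, Complex.zero_im, ← hx, ← hy] at hre him
  set P : ℝ := x*x - y*y with hP
  set Q : ℝ := 2*(x*y) with hQ
  have him2 : Q * (2*ar*P + 10*br) = 0 := by
    rw [hP, hQ]; linear_combination him
  have hre2 : ar*(P*P - Q*Q) + 10*br*P + cr = 0 := by
    rw [hP, hQ]; linear_combination hre
  have hQ0 : Q = 0 := by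
    rcases mul_eq_zero.mp him2 with h | h
    · exact h
    · have f1 : ar*P + 5*br = 0 := by linarith
      have f2 : ar*ar*(Q*Q) = ar*cr - 25*br^2 := by
        linear_combination (-ar)*hre2 + (ar*P + 5*br)*f1
      have hQQ : Q*Q ≤ 0 := by
        have g1 : ar*ar*(Q*Q) ≤ 0 := by nlinarith
        nlinarith [mul_pos ha ha, mul_self_nonneg Q]
      have : Q*Q = 0 := le_antisymm hQQ (mul_self_nonneg Q)
      exact mul_self_eq_zero.mp this
  have hP0 : P ≤ 0 := by
    by_contra hPpos
    push_neg at hPpos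
    rw [hQ0] at hre2
    nlinarith [mul_pos ha (mul_pos hPpos hPpos)]
  have hxy : x * y = 0 := by rw [hQ] at hQ0; linarith
  rcases mul_eq_zero.mp hxy with h | h
  · exact h
  · rw [h] at hP
    nlinarith [sq_nonneg x, hP0, hP]

private lemma neg_disc (ar br cr : ℝ) (ha : 0 < ar) (hd : 25*br^2 < ar*cr) :
    ∃ s : ℂ, ((ar:ℂ)*s^4 + 10*(br:ℂ)*s^2 + (cr:ℂ) = 0) ∧ s.re ≠ 0 := by
  set p : ℝ := -5*br/ar with hp
  set q : ℝ := Real.sqrt (cr/ar - 25*br^2/ar^2) with hq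
  have har : ar ≠ 0 := ne_of_gt ha
  have hpos : 0 < cr/ar - 25*br^2/ar^2 := by
    rw [div_sub_div _ _ har (by positivity)]
    apply div_pos
    · nlinarith
    · positivity
  have hq0 : 0 < q := Real.sqrt_pos.mpr hpos
  have hq2 : q^2 = cr/ar - 25*br^2/ar^2 := Real.sq_sqrt hpos.le
  set u : ℂ := (p:ℂ) + (q:ℂ)*Complex.I with hu
  obtain ⟨s, hs⟩ := IsAlgClosed.exists_pow_nat_eq u (n := 2) (by norm_num)
  refine ⟨s, ?_, ?_⟩
  · have key : (ar:ℂ)*(u*u) + 10*(br:ℂ)*u + (cr:ℂ) = 0 := by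
      rw [hu]
      have hqq : q*q = cr/ar - 25*br^2/ar^2 := by rw [← hq2]; ring
      have hre : ar*(p*p - q*q) + 10*br*p + cr = 0 := by
        rw [hp, hqq]; field_simp; ring
      have him : ar*(p*q + q*p) + 10*br*q = 0 := by
        rw [hp]; field_simp; ring
      apply Complex.ext
      · simpa [Complex.mul_re, Complex.mul_im, Complex.add_re, Complex.add_im] using hre
      · simpa [Complex.mul_re, Complex.mul_im, Complex.add_re, Complex.add_im] using him
    calc (ar:ℂ)*s^4 + 10*(br:ℂ)*s^2 + (cr:ℂ)
        = (ar:ℂ)*((s^2)*(s^2)) + 10*(br:ℂ)*(s^2) + (cr:ℂ) := by ring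
      _ = 0 := by rw [hs]; convert key using 2 <;> ring
  · intro hsre
    have him : (s^2).im = q := by rw [hs, hu]; simp
    rw [sq, Complex.mul_im, hsre] at him
    simp at him
    rw [← him] at hq0
    simp at hq0

private lemma pos_real_root (ar br cr : ℝ) (ha : 0 < ar) (hd : ar*cr ≤ 25*br^2)
    (hbc : br < 0 ∨ cr < 0) :
    ∃ w : ℝ, 0 < w ∧ ar*w^4 + 10*br*w^2 + cr = 0 := by
  have har : ar ≠ 0 := ne_of_gt ha
  set D : ℝ := 100*br^2 - 4*(ar*cr) with hD
  have hD0 : 0 ≤ D := by rw [hD]; nlinarith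
  have hsq : Real.sqrt D ^ 2 = D := Real.sq_sqrt hD0
  set u : ℝ := (-10*br + Real.sqrt D)/(2*ar) with hu
  have hupos : 0 < u := by
    apply div_pos _ (by linarith)
    rcases hbc with h | h
    · have := Real.sqrt_nonneg D
      linarith
    · have h1 : 100*br^2 < D := by rw [hD]; nlinarith
      have h2 : Real.sqrt (100*br^2) < Real.sqrt D := Real.sqrt_lt_sqrt (by positivity) h1
      have h3 : Real.sqrt (100*br^2) = |10*br| := by
        rw [show (100:ℝ)*br^2 = (10*br)^2 by ring, Real.sqrt_sq_eq_abs]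
      have := le_abs_self (10*br)
      rw [h3] at h2
      linarith
  have hroot : ar*u^2 + 10*br*u + cr = 0 := by
    rw [hu]
    field_simp
    nlinarith [hsq]
  exact ⟨Real.sqrt u, Real.sqrt_pos.mpr hupos, by
    rw [show (Real.sqrt u)^4 = (Real.sqrt u ^ 2)^2 by ring, Real.sq_sqrt hupos.le]
    exact hroot⟩

set_option maxHeartbeats 1000000 in
private lemma cl_iff_conds (δ1 δ2 : ℤ) (ha : 0 < 1+δ1+δ2) :
    IsCL (ehrQ δ1 δ2) ↔
      (0 ≤ 23+7*δ1-δ2 ∧ 0 ≤ 1689-71*δ1+9*δ2 ∧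
        (1+δ1+δ2)*(1689-71*δ1+9*δ2) ≤ 25*(23+7*δ1-δ2)^2) := by
  set ar : ℝ := ((1+δ1+δ2 : ℤ) : ℝ) with har_def
  set br : ℝ := ((23+7*δ1-δ2 : ℤ) : ℝ) with hbr_def
  set cr : ℝ := ((1689-71*δ1+9*δ2 : ℤ) : ℝ) with hcr_def
  have har : 0 < ar := by rw [har_def]; exact_mod_cast ha
  have hev0 : (ehrQ δ1 δ2).eval 0 = 1 := by simp [ehrQ]
  have hne : (ehrQ δ1 δ2).map (algebraMap ℚ ℂ) ≠ 0 := by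
    intro h
    have h2 : ((ehrQ δ1 δ2).map (algebraMap ℚ ℂ)).eval 0 = 0 := by rw [h]; simp
    rw [show (0:ℂ) = algebraMap ℚ ℂ 0 by simp, Polynomial.eval_map,
      Polynomial.eval₂_hom, hev0] at h2
    norm_num at h2
  have hmem : ∀ z : ℂ, z ∈ cRoots (ehrQ δ1 δ2) ↔
      ((ehrQ δ1 δ2).map (algebraMap ℚ ℂ)).eval z = 0 := by
    intro z
    rw [cRoots, Polynomial.mem_roots hne]
    exact Iff.rfl
  have hfac : ∀ z : ℂ, 1920 * ((ehrQ δ1 δ2).map (algebraMap ℚ ℂ)).eval z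
      = (2*z+1) * ((ar:ℂ)*(2*z+1)^4 + 10*(br:ℂ)*(2*z+1)^2 + (cr:ℂ)) := by
    intro z
    rw [QevalC]
    rw [har_def, hbr_def, hcr_def]
    push_cast
    ring
  constructor
  · intro hCL
    have hroot : ∀ s : ℂ, ((ar:ℂ)*s^4 + 10*(br:ℂ)*s^2 + (cr:ℂ) = 0) → s.re = 0 := by
      intro s hs
      set z : ℂ := (s - 1)/2 with hz
      have h2z : 2*z+1 = s := by rw [hz]; ring
      have heval : ((ehrQ δ1 δ2).map (algebraMap ℚ ℂ)).eval z = 0 := by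
        have h1 := hfac z
        rw [h2z, hs, mul_zero] at h1
        linear_combination (1/1920 : ℂ) * h1
      have hre := hCL z ((hmem z).mpr heval)
      have hsre : s.re = 2*z.re+1 := by rw [← h2z]; simp
      rw [hre] at hsre
      rw [hsre]; norm_num
    have hd : (1+δ1+δ2)*(1689-71*δ1+9*δ2) ≤ 25*(23+7*δ1-δ2)^2 := by
      by_contra hcon
      push_neg at hcon
      have hcon' : 25*br^2 < ar*cr := by
        rw [har_def, hbr_def, hcr_def]; exact_mod_cast hcon
      obtain ⟨s, hs, hsre⟩ := neg_disc ar br cr har hcon'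
      exact hsre (hroot s hs)
    have hdr : ar*cr ≤ 25*br^2 := by
      rw [har_def, hbr_def, hcr_def]; exact_mod_cast hd
    have hposroot : ∀ w : ℝ, 0 < w → ¬ (ar*w^4 + 10*br*w^2 + cr = 0) := by
      intro w hw hweq
      have hwre : ((w:ℂ)).re = 0 := by
        apply hroot
        have hcastd := congrArg (Complex.ofReal) hweq
        push_cast at hcastd ⊢
        convert hcastd using 1
      simp at hwre
      rw [hwre] at hw
      exact lt_irrefl 0 hw
    have hb : 0 ≤ 23+7*δ1-δ2 := by
      by_contra hcon
      push_neg at hcon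
      have : br < 0 := by rw [hbr_def]; exact_mod_cast hcon
      obtain ⟨w, hw, hweq⟩ := pos_real_root ar br cr har hdr (Or.inl this)
      exact hposroot w hw hweq
    have hc : 0 ≤ 1689-71*δ1+9*δ2 := by
      by_contra hcon
      push_neg at hcon
      have : cr < 0 := by rw [hcr_def]; exact_mod_cast hcon
      obtain ⟨w, hw, hweq⟩ := pos_real_root ar br cr har hdr (Or.inr this)
      exact hposroot w hw hweq
    exact ⟨hb, hc, hd⟩
  · rintro ⟨hb, hc, hd⟩ z hz
    rw [hmem z] at hz
    have h1 : (2*z+1) * ((ar:ℂ)*(2*z+1)^4 + 10*(br:ℂ)*(2*z+1)^2 + (cr:ℂ)) = 0 := by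
      rw [← hfac z, hz, mul_zero]
    have hbr : 0 ≤ br := by rw [hbr_def]; exact_mod_cast hb
    have hcr : 0 ≤ cr := by rw [hcr_def]; exact_mod_cast hc
    have hdr : ar*cr ≤ 25*br^2 := by
      rw [har_def, hbr_def, hcr_def]; exact_mod_cast hd
    rcases mul_eq_zero.mp h1 with h | h
    · have h2 := congrArg Complex.re h
      simp [Complex.add_re, Complex.mul_re] at h2
      linarith
    · have hs := key_quartic ar br cr har hbr hcr hdr (2*z+1) h
      have h2 : (2*z+1).re = 2*z.re+1 := by simp
      rw [h2] at hs
      linarith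

theorem statement11 (P : Set (Fin 5 → ℝ)) (L : Polynomial ℚ) (δ1 δ2 : ℤ)
    (hP : IsLatticePolytope 5 P) (hdim : IsFullDim 5 P) (href : IsReflexive 5 P)
    (hL : IsEhrhart 5 P L) (hδ : HasDeltaVector 5 L ![1, δ1, δ2, δ2, δ1, 1]) :
    (IsCL L ↔
      (δ1 = 237 ∧ δ2 = 1682) ∨
      (δ2 < 7 * δ1 + 23 ∧ 71 * δ1 ≤ 9 * δ2 + 1689 ∧
        41 * (δ1 + 9 * δ2 - 9) ^ 2 ≤ 2 * (41 * δ1 + 96) ^ 2 + 2 * (41 * δ2 - 85) ^ 2)) ∧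
    (IsCL L → δ1 ≤ 237 ∧ δ2 ≤ 1682) := by
  have hQ : L = ehrQ δ1 δ2 := LeqQ L δ1 δ2 hδ
  have ha : 0 < 1 + δ1 + δ2 := a0_pos P L δ1 δ2 hP href.1 hL hQ
  rw [hQ, cl_iff_conds δ1 δ2 ha]
  have hid : 16*(2*(41*δ1+96)^2 + 2*(41*δ2-85)^2 - 41*(δ1+9*δ2-9)^2)
      = 41*(25*(23+7*δ1-δ2)^2 - (1+δ1+δ2)*(1689-71*δ1+9*δ2)) := by ring
  constructor
  · constructor
    · rintro ⟨hb, hc, hd⟩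
      rcases eq_or_lt_of_le hb with hb0 | hbpos
      · left
        have hc0 : (1689-71*δ1+9*δ2) = 0 := by nlinarith
        omega
      · right
        refine ⟨by omega, by omega, ?_⟩
        nlinarith [hid, hd]
    · rintro (⟨h1, h2⟩ | ⟨h1, h2, h3⟩)
      · subst h1; subst h2; norm_num
      · exact ⟨by omega, by omega, by nlinarith [hid, h3]⟩
  · rintro ⟨hb, hc, _⟩
    omega
end
end

section
/- Let P ⊂ ℝ⁵ be a 5-dimensional reflexive polytope with δ-vector (1, δ_1, δ_2, δ_2, δ_1, 1). Then P is real if and only if either (i) δ_1 = 237 and δ_2 = 1682, or (ii) δ_2 > 7δ_1 + 23, 71δ_1 ≤ 9δ_2 + 1689, and 41(δ_1 + 9δ_2 − 9)² ≤ 2(41δ_1 + 96)² + 2(41δ_2 − 85)². -/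
open Pointwise MeasureTheory Polynomial

noncomputable section

def Lexp (δ1 δ2 : ℤ) : Polynomial ℚ :=
  C ((2+2*(δ1:ℚ)+2*(δ2:ℚ))/120) * X^5 + C ((5+5*(δ1:ℚ)+5*(δ2:ℚ))/120) * X^4 +
  C ((120+40*(δ1:ℚ))/120) * X^3 + C ((175+55*(δ1:ℚ)-5*(δ2:ℚ))/120) * X^2 +
  C ((298+18*(δ1:ℚ)-2*(δ2:ℚ))/120) * X + C 1

lemma Lexp_eval (δ1 δ2 : ℤ) (x : ℚ) : (Lexp δ1 δ2).eval x =
    ((2+2*(δ1:ℚ)+2*(δ2:ℚ))*x^5 + (5+5*(δ1:ℚ)+5*(δ2:ℚ))*x^4 + (120+40*(δ1:ℚ))*x^3 +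
     (175+55*(δ1:ℚ)-5*(δ2:ℚ))*x^2 + (298+18*(δ1:ℚ)-2*(δ2:ℚ))*x + 120)/120 := by
  simp [Lexp]; ring

lemma choose5 (p : ℕ) : (((p+5).choose 5 : ℕ) : ℚ) = ((p:ℚ)+1)*((p:ℚ)+2)*((p:ℚ)+3)*((p:ℚ)+4)*((p:ℚ)+5)/120 := by
  rw [Nat.cast_choose ℚ (by omega : 5 ≤ p + 5)]
  have h : p + 5 - 5 = p := by omega
  rw [h]
  have h5 : ((p+5).factorial : ℚ) = ((p:ℚ)+1)*((p:ℚ)+2)*((p:ℚ)+3)*((p:ℚ)+4)*((p:ℚ)+5) * (p.factorial : ℚ) := by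
    have : (p+5).factorial = (p+5)*((p+4)*((p+3)*((p+2)*((p+1)*p.factorial)))) := by
      simp [show p+5 = (p+4)+1 by omega, show p+4 = (p+3)+1 by omega, show p+3 = (p+2)+1 by omega,
        show p+2 = (p+1)+1 by omega, Nat.factorial_succ]
    rw [this]; push_cast; ring
  rw [h5]
  have hf : (p.factorial : ℚ) ≠ 0 := Nat.cast_ne_zero.mpr p.factorial_ne_zero
  have h120 : ((5:ℕ).factorial : ℚ) = 120 := by norm_num [Nat.factorial]
  rw [h120]; field_simp

lemma L_eq (L : Polynomial ℚ) (δ1 δ2 : ℤ) (hδ : HasDeltaVector 5 L ![1, δ1, δ2, δ2, δ1, 1]) :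
    L = Lexp δ1 δ2 := by
  apply Polynomial.eq_of_infinite_eval_eq
  apply Set.infinite_of_injective_forall_mem (f := fun n : ℕ => ((n+5 : ℕ) : ℚ))
  · intro a b hab
    simp only [Nat.cast_inj] at hab; omega
  · intro n
    have h := hδ (n+5)
    simp only [Nat.reduceAdd, Fin.sum_univ_six, Matrix.cons_val_zero, Matrix.cons_val_one,
      Matrix.head_cons, Matrix.cons_val_succ,
      show ![(1:ℤ), δ1, δ2, δ2, δ1, 1] 2 = δ2 from rfl,
      show ![(1:ℤ), δ1, δ2, δ2, δ1, 1] 3 = δ2 from rfl,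
      show ![(1:ℤ), δ1, δ2, δ2, δ1, 1] 4 = δ1 from rfl,
      show ![(1:ℤ), δ1, δ2, δ2, δ1, 1] 5 = 1 from rfl,
      show (((2:Fin 6)):ℕ) = 2 from rfl, show (((3:Fin 6)):ℕ) = 3 from rfl,
      show (((4:Fin 6)):ℕ) = 4 from rfl, show (((5:Fin 6)):ℕ) = 5 from rfl,
      show (((0:Fin 6)):ℕ) = 0 from rfl, show (((1:Fin 6)):ℕ) = 1 from rfl] at h
    rw [show 5 + (n + 5) - 0 = (n+5)+5 by omega, show 5 + (n + 5) - 1 = (n+4)+5 by omega,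
      show 5 + (n + 5) - 2 = (n+3)+5 by omega, show 5 + (n + 5) - 3 = (n+2)+5 by omega,
      show 5 + (n + 5) - 4 = (n+1)+5 by omega, show 5 + (n + 5) - 5 = n+5 by omega] at h
    simp only [Set.mem_setOf_eq, h, choose5, Lexp_eval]
    push_cast
    ring

set_option maxHeartbeats 2000000 in
lemma delta_pos (P : Set (Fin 5 → ℝ)) (L : Polynomial ℚ) (δ1 δ2 : ℤ)
    (hP : IsLatticePolytope 5 P) (h0 : (0:Fin 5 → ℝ) ∈ interior P)
    (hL : IsEhrhart 5 P L) (hLeq : L = Lexp δ1 δ2) : 0 < 1+δ1+δ2 := by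
  obtain ⟨ε, hε, hball⟩ : ∃ ε > 0, Metric.ball (0:Fin 5→ℝ) ε ⊆ P :=
    Metric.mem_nhds_iff.mp (mem_interior_iff_mem_nhds.mp h0)
  obtain ⟨V, hV⟩ := hP
  have hPc : IsCompact P := by
    rw [hV]; exact (V.finite_toSet.image _).isCompact_convexHull ℝ
  obtain ⟨R, hR⟩ := isBounded_iff_forall_norm_le.mp hPc.isBounded
  -- finiteness of lattice point sets
  have hfin : ∀ m : ℕ, (latticePts 5 ((m:ℝ)•P)).Finite := by
    intro m
    apply Set.Finite.subset (Set.finite_Icc (fun _ : Fin 5 => -(⌈(m:ℝ) * max R 0⌉ : ℤ))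
      (fun _ : Fin 5 => (⌈(m:ℝ) * max R 0⌉ : ℤ)))
    intro x hx
    obtain ⟨p, hp, hpx⟩ := hx
    have hnorm : ‖(fun i => (x i : ℝ))‖ ≤ (m:ℝ) * max R 0 := by
      rw [← hpx, norm_smul]
      simp only [Real.norm_natCast]
      have h1 : ‖p‖ ≤ max R 0 := le_trans (hR p hp) (le_max_left _ _)
      exact mul_le_mul_of_nonneg_left h1 (Nat.cast_nonneg m)
    rw [Set.mem_Icc]
    constructor <;> intro i
    · have h2 : ‖(x i : ℝ)‖ ≤ (m:ℝ) * max R 0 :=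
        le_trans (norm_le_pi_norm (fun i => (x i : ℝ)) i) hnorm
      rw [Real.norm_eq_abs, abs_le] at h2
      have h3 : -(⌈(m:ℝ) * max R 0⌉ : ℝ) ≤ (x i : ℝ) :=
        le_trans (neg_le_neg (Int.le_ceil _)) h2.1
      exact_mod_cast h3
    · have h2 : ‖(x i : ℝ)‖ ≤ (m:ℝ) * max R 0 :=
        le_trans (norm_le_pi_norm (fun i => (x i : ℝ)) i) hnorm
      rw [Real.norm_eq_abs, abs_le] at h2
      have h3 : (x i : ℝ) ≤ (⌈(m:ℝ) * max R 0⌉ : ℝ) := le_trans h2.2 (Int.le_ceil _)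
      exact_mod_cast h3
  -- counting lower bound
  have hcount : ∀ N m : ℕ, (N:ℝ) < m*ε → ((2*N+1)^5 : ℕ) ≤ (latticePts 5 ((m:ℝ)•P)).ncard := by
    intro N m hNm
    have hm0 : 0 < (m:ℝ) := by
      rcases Nat.eq_zero_or_pos m with h | h
      · exfalso; rw [h] at hNm; simp at hNm; nlinarith [Nat.cast_nonneg (α := ℝ) N]
      · exact_mod_cast h
    have hsub : Set.Icc (fun _ : Fin 5 => -(N:ℤ)) (fun _ : Fin 5 => (N:ℤ)) ⊆
        latticePts 5 ((m:ℝ)•P) := by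
      intro x hx
      rw [Set.mem_Icc] at hx
      show (fun i => (x i : ℝ)) ∈ (m:ℝ) • P
      rw [Set.mem_smul_set_iff_inv_smul_mem₀ (ne_of_gt hm0)]
      apply hball
      rw [mem_ball_zero_iff, norm_smul]
      have hnx : ‖(fun i => (x i : ℝ))‖ ≤ (N:ℝ) := by
        apply pi_norm_le_iff_of_nonneg (Nat.cast_nonneg N) |>.mpr
        intro i
        rw [Real.norm_eq_abs, abs_le]
        constructor
        · exact_mod_cast hx.1 i
        · exact_mod_cast hx.2 i
      have : ‖(m:ℝ)⁻¹‖ = (m:ℝ)⁻¹ := by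
        rw [Real.norm_eq_abs, abs_of_pos (by positivity)]
      rw [this]
      calc (m:ℝ)⁻¹ * ‖(fun i => (x i : ℝ))‖ ≤ (m:ℝ)⁻¹ * N := by
            exact mul_le_mul_of_nonneg_left hnx (by positivity)
        _ < ε := by
            rw [inv_mul_lt_iff₀ hm0]; linarith [hNm]
    have hcard : (Set.Icc (fun _ : Fin 5 => -(N:ℤ)) (fun _ : Fin 5 => (N:ℤ))).ncard
        = (2*N+1)^5 := by
      rw [← Finset.coe_Icc, Set.ncard_coe_finset, Pi.card_Icc]
      simp only [Int.card_Icc]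
      rw [Finset.prod_const]
      norm_num
      omega
    calc ((2*N+1)^5 : ℕ) = _ := hcard.symm
      _ ≤ _ := Set.ncard_le_ncard hsub (hfin m)
  -- final contradiction argument
  by_contra hneg
  push_neg at hneg
  have hs : (1:ℚ)+(δ1:ℚ)+(δ2:ℚ) ≤ 0 := by exact_mod_cast hneg
  obtain ⟨C, hCdef⟩ : ∃ C : ℚ, C = |120+40*(δ1:ℚ)| + |175+55*(δ1:ℚ)-5*(δ2:ℚ)|
      + |298+18*(δ1:ℚ)-2*(δ2:ℚ)| + 120 := ⟨_, rfl⟩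
  have hCpos : 0 < C := by
    rw [hCdef]
    have := abs_nonneg (120+40*(δ1:ℚ))
    have := abs_nonneg (175+55*(δ1:ℚ)-5*(δ2:ℚ))
    have := abs_nonneg (298+18*(δ1:ℚ)-2*(δ2:ℚ))
    linarith
  obtain ⟨K, hKdef⟩ : ∃ K : ℝ, K = max (1/ε) 1 := ⟨_, rfl⟩
  have hK1 : 1 ≤ K := by rw [hKdef]; exact le_max_right _ _
  have hKε : 1/ε ≤ K := by rw [hKdef]; exact le_max_left _ _
  have hCr : (0:ℝ) < (C:ℝ) := by exact_mod_cast hCpos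
  have hKpos : (0:ℝ) < K := lt_of_lt_of_le one_pos hK1
  obtain ⟨N, hN⟩ := exists_nat_ge ((C:ℝ)*K^3 + 1)
  have hN1 : 1 ≤ (N:ℝ) := le_trans (by nlinarith [pow_pos hKpos 3]) hN
  have hN1' : 1 ≤ N := by exact_mod_cast hN1
  obtain ⟨m, hmdef⟩ : ∃ m : ℕ, m = ⌊(N:ℝ)/ε⌋₊ + 1 := ⟨_, rfl⟩
  have hNm : (N:ℝ) < m*ε := by
    rw [hmdef]
    have h1 : (N:ℝ)/ε < ⌊(N:ℝ)/ε⌋₊ + 1 := Nat.lt_floor_add_one _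
    rw [div_lt_iff₀ hε] at h1
    calc (N:ℝ) < (↑⌊(N:ℝ)/ε⌋₊ + 1)*ε := h1
      _ = ↑(⌊(N:ℝ)/ε⌋₊ + 1)*ε := by push_cast; ring
  have hm1 : 1 ≤ m := by omega
  have hm1' : 1 ≤ (m:ℚ) := by exact_mod_cast hm1
  have hmK : (m:ℝ) ≤ 2*N*K := by
    rw [hmdef]
    push_cast
    have h1 : (⌊(N:ℝ)/ε⌋₊ : ℝ) ≤ (N:ℝ)/ε := Nat.floor_le (by positivity)
    have h2 : (N:ℝ)/ε = N*(1/ε) := by ring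
    have h3 : (N:ℝ)*(1/ε) ≤ N*K := mul_le_mul_of_nonneg_left hKε (by positivity)
    have h4 : (1:ℝ) ≤ N*K := by nlinarith
    linarith
  -- the Ehrhart value bound
  have hval := hL m
  rw [hLeq, Lexp_eval] at hval
  have hcnt := hcount N m hNm
  have hQ1 : ((2*N+1:ℕ)^5 : ℚ) ≤ ((latticePts 5 ((m:ℝ)•P)).ncard : ℚ) := by exact_mod_cast hcnt
  rw [← hval] at hQ1
  -- bound the polynomial value
  have hple : ((2+2*(δ1:ℚ)+2*(δ2:ℚ))*(m:ℚ)^5 + (5+5*(δ1:ℚ)+5*(δ2:ℚ))*(m:ℚ)^4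
      + (120+40*(δ1:ℚ))*(m:ℚ)^3 + (175+55*(δ1:ℚ)-5*(δ2:ℚ))*(m:ℚ)^2
      + (298+18*(δ1:ℚ)-2*(δ2:ℚ))*(m:ℚ) + 120) ≤ C*(m:ℚ)^3 := by
    have hm0 : (0:ℚ) ≤ (m:ℚ) := by positivity
    have e3 : (120+40*(δ1:ℚ))*(m:ℚ)^3 ≤ |120+40*(δ1:ℚ)| * (m:ℚ)^3 :=
      mul_le_mul_of_nonneg_right (le_abs_self _) (by positivity)
    have e2 : (175+55*(δ1:ℚ)-5*(δ2:ℚ))*(m:ℚ)^2 ≤ |175+55*(δ1:ℚ)-5*(δ2:ℚ)| * (m:ℚ)^3 := by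
      calc (175+55*(δ1:ℚ)-5*(δ2:ℚ))*(m:ℚ)^2 ≤ |175+55*(δ1:ℚ)-5*(δ2:ℚ)| * (m:ℚ)^2 :=
            mul_le_mul_of_nonneg_right (le_abs_self _) (by positivity)
        _ ≤ |175+55*(δ1:ℚ)-5*(δ2:ℚ)| * (m:ℚ)^3 := by
            apply mul_le_mul_of_nonneg_left _ (abs_nonneg _)
            nlinarith
    have e1 : (298+18*(δ1:ℚ)-2*(δ2:ℚ))*(m:ℚ) ≤ |298+18*(δ1:ℚ)-2*(δ2:ℚ)| * (m:ℚ)^3 := by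
      calc (298+18*(δ1:ℚ)-2*(δ2:ℚ))*(m:ℚ) ≤ |298+18*(δ1:ℚ)-2*(δ2:ℚ)| * (m:ℚ) :=
            mul_le_mul_of_nonneg_right (le_abs_self _) (by positivity)
        _ ≤ |298+18*(δ1:ℚ)-2*(δ2:ℚ)| * (m:ℚ)^3 := by
            apply mul_le_mul_of_nonneg_left _ (abs_nonneg _)
            nlinarith
    have e0 : (120:ℚ) ≤ 120*(m:ℚ)^3 := by nlinarith
    have e5 : (2+2*(δ1:ℚ)+2*(δ2:ℚ))*(m:ℚ)^5 ≤ 0 := by nlinarith [pow_nonneg hm0 5]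
    have e4 : (5+5*(δ1:ℚ)+5*(δ2:ℚ))*(m:ℚ)^4 ≤ 0 := by nlinarith [pow_nonneg hm0 4]
    rw [hCdef]
    nlinarith [e0, e1, e2, e3, e4, e5]
  have hQ2 : ((2*N+1:ℕ)^5 : ℚ) ≤ C*(m:ℚ)^3/120 := by
    calc ((2*N+1:ℕ)^5 : ℚ) ≤ _ := hQ1
      _ ≤ C*(m:ℚ)^3/120 := by
          apply div_le_div_of_nonneg_right ?_ (by norm_num)
          exact hple
  -- transfer to ℝ and derive contradiction
  have hQ3 : (((2*N+1:ℕ)^5 : ℚ) : ℝ) ≤ ((C:ℝ)*(m:ℝ)^3/120) := by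
    have := hQ2
    have h' : (((2*N+1:ℕ)^5 : ℚ):ℝ) ≤ ((C*(m:ℚ)^3/120 : ℚ):ℝ) := by exact_mod_cast this
    calc (((2*N+1:ℕ)^5 : ℚ):ℝ) ≤ _ := h'
      _ = (C:ℝ)*(m:ℝ)^3/120 := by push_cast; ring
  have hNlhs : (N:ℝ)^5 ≤ (((2*N+1:ℕ)^5 : ℚ) : ℝ) := by
    push_cast
    apply pow_le_pow_left₀ (Nat.cast_nonneg N)
    push_cast
    linarith [Nat.cast_nonneg (α := ℝ) N]
  have hCK : (C:ℝ)*K^3 + 1 ≤ (N:ℝ) := hN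
  have hm0r : (0:ℝ) ≤ (m:ℝ) := by positivity
  have hmcube : (m:ℝ)^3 ≤ (2*N*K)^3 := pow_le_pow_left₀ hm0r hmK 3
  have hfinal : (C:ℝ)*(m:ℝ)^3/120 ≤ (C:ℝ)*(2*N*K)^3/120 := by
    apply div_le_div_of_nonneg_right ?_ (by norm_num)
    exact mul_le_mul_of_nonneg_left hmcube hCr.le
  have hlast : (N:ℝ)^5 ≤ (C:ℝ)*(2*N*K)^3/120 := le_trans (le_trans hNlhs hQ3) hfinal
  -- but C*K^3 < N and N ≥ 1 give contradiction
  have hP3 : (0:ℝ) ≤ (N:ℝ)^3 := by positivity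
  have hstep1 : (C:ℝ)*K^3*(N:ℝ)^3 ≤ ((N:ℝ)-1)*(N:ℝ)^3 :=
    mul_le_mul_of_nonneg_right (by linarith) hP3
  have hexp : (C:ℝ)*(2*(N:ℝ)*K)^3/120 = (8/120)*((C:ℝ)*K^3*(N:ℝ)^3) := by ring
  have h45 : (N:ℝ)^4 ≤ (N:ℝ)^5 := pow_le_pow_right₀ hN1 (by norm_num)
  have hsub : ((N:ℝ)-1)*(N:ℝ)^3 ≤ (N:ℝ)^4 := by nlinarith [hP3]
  have hone : (1:ℝ) ≤ (N:ℝ)^5 := one_le_pow₀ hN1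
  rw [hexp] at hlast
  linarith

lemma sq_real_im (w : ℂ) (c : ℝ) (hc : 0 ≤ c) (h : w^2 = (c:ℂ)) : w.im = 0 := by
  have him : (w^2).im = 0 := by rw [h]; simp
  have hre : (w^2).re = c := by rw [h]; simp
  rw [pow_two, Complex.mul_im] at him
  rw [pow_two, Complex.mul_re] at hre
  rcases mul_eq_zero.mp (by linarith : w.re * w.im = 0) with h1 | h1
  · nlinarith [sq_nonneg w.im]
  · exact h1

lemma root_real_of (x : ℝ) (hx : -(1/4) ≤ x) (z : ℂ) (hz : z^2+z = ((x:ℝ):ℂ)) : z.im = 0 := by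
  have hw : (2*z+1)^2 = (((4*x+1 : ℝ)):ℂ) := by push_cast; linear_combination 4*hz
  have := sq_real_im (2*z+1) (4*x+1) (by linarith) hw
  have h2 : (2*z+1).im = 2*z.im := by simp
  rw [h2] at this; linarith

lemma im_of_neg_half (z : ℂ) (h : 2*z+1 = 0) : z.im = 0 := by
  have hz : z = -(1/2 : ℂ) := by linear_combination h/2
  rw [hz]; simp

set_option maxHeartbeats 2000000 in
lemma main_alg (δ1 δ2 : ℤ) (hA : 0 < 1+δ1+δ2) :
    (∀ z : ℂ, (2*z+1) * ((1+(δ1:ℂ)+(δ2:ℂ))*(z^2+z)^2 + (58+18*(δ1:ℂ)-2*(δ2:ℂ))*(z^2+z) + 120) = 0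
      → z.im = 0)
    ↔ ((δ1 = 237 ∧ δ2 = 1682) ∨
      (δ2 > 7 * δ1 + 23 ∧ 71 * δ1 ≤ 9 * δ2 + 1689 ∧
        41 * (δ1 + 9 * δ2 - 9) ^ 2 ≤ 2 * (41 * δ1 + 96) ^ 2 + 2 * (41 * δ2 - 85) ^ 2)) := by
  obtain ⟨A, hAdef⟩ : ∃ A : ℝ, A = 1+(δ1:ℝ)+(δ2:ℝ) := ⟨_, rfl⟩
  obtain ⟨B, hBdef⟩ : ∃ B : ℝ, B = 58+18*(δ1:ℝ)-2*(δ2:ℝ) := ⟨_, rfl⟩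
  have hApos : 0 < A := by rw [hAdef]; exact_mod_cast hA
  have hAc : ((A:ℝ):ℂ) = 1+(δ1:ℂ)+(δ2:ℂ) := by rw [hAdef]; push_cast; ring
  have hBc : ((B:ℝ):ℂ) = 58+18*(δ1:ℂ)-2*(δ2:ℂ) := by rw [hBdef]; push_cast; ring
  have hAc0 : ((A:ℝ):ℂ) ≠ 0 := by
    simp only [ne_eq, Complex.ofReal_eq_zero]; exact ne_of_gt hApos
  have h2A0 : (2:ℂ)*((A:ℝ):ℂ) ≠ 0 := mul_ne_zero two_ne_zero hAc0
  constructor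
  · -- real-rooted → conditions
    intro H
    -- discriminant nonneg
    have hD : (0:ℝ) ≤ B^2 - 480*A := by
      by_contra hcon
      push_neg at hcon
      obtain ⟨r, hrdef⟩ : ∃ r : ℝ, r = Real.sqrt (480*A - B^2) := ⟨_, rfl⟩
      have hr2 : r^2 = 480*A - B^2 := by rw [hrdef]; exact Real.sq_sqrt (by linarith)
      have hrpos : 0 < r := by rw [hrdef]; exact Real.sqrt_pos.mpr (by linarith)
      obtain ⟨u, hudef⟩ : ∃ u : ℂ, u = ((-B/(2*A) : ℝ):ℂ) + ((r/(2*A) : ℝ):ℂ) * Complex.I := ⟨_, rfl⟩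
      have hrc : ((r:ℝ):ℂ)^2 = 480*((A:ℝ):ℂ) - ((B:ℝ):ℂ)^2 := by exact_mod_cast hr2
      have hstep : 2*((A:ℝ):ℂ)*u + ((B:ℝ):ℂ) = ((r:ℝ):ℂ)*Complex.I := by
        rw [hudef]; push_cast
        field_simp
        ring
      have h4 : (2*((A:ℝ):ℂ)*u + ((B:ℝ):ℂ))^2 = -(((r:ℝ):ℂ)^2) := by
        rw [hstep, mul_pow, Complex.I_sq]; ring
      have hQu : ((A:ℝ):ℂ)*u^2 + ((B:ℝ):ℂ)*u + 120 = 0 := by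
        have h40 : 4*((A:ℝ):ℂ)*(((A:ℝ):ℂ)*u^2 + ((B:ℝ):ℂ)*u + 120) = 0 := by
          linear_combination h4 - hrc
        rcases mul_eq_zero.mp h40 with h | h
        · exact absurd h (by simp [hAc0])
        · exact h
      obtain ⟨w, hw⟩ : ∃ w : ℂ, w^2 = 4*u+1 :=
        ⟨(4*u+1) ^ (((2:ℕ):ℂ))⁻¹, by exact_mod_cast Complex.cpow_nat_inv_pow _ (by norm_num)⟩
      obtain ⟨z, hzdef⟩ : ∃ z : ℂ, z = (w-1)/2 := ⟨_, rfl⟩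
      have hz2 : z^2 + z = u := by rw [hzdef]; linear_combination hw/4
      have hzim : z.im = 0 := by
        apply H z
        rw [hz2, ← hAc, ← hBc, hQu, mul_zero]
      have huim : u.im = 0 := by
        rw [← hz2]
        have hzr : z = ((z.re : ℝ):ℂ) := Complex.ext rfl (by simp [hzim])
        rw [hzr, ← Complex.ofReal_pow, ← Complex.ofReal_add, Complex.ofReal_im]
      have : u.im = r/(2*A) := by
        rw [hudef]
        simp only [Complex.add_im, Complex.mul_im, Complex.I_im, Complex.I_re, Complex.ofReal_im,
          Complex.ofReal_re]
        ring
      rw [this] at huim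
      exact absurd huim (ne_of_gt (by positivity))
    -- integer discriminant
    have hDZ : (0:ℤ) ≤ (58+18*δ1-2*δ2)^2 - 480*(1+δ1+δ2) := by
      have : (0:ℝ) ≤ ((((58+18*δ1-2*δ2)^2 - 480*(1+δ1+δ2) : ℤ)):ℝ) := by
        push_cast
        rw [hAdef, hBdef] at hD
        linarith [hD]
      exact_mod_cast this
    have hC3 : 41 * (δ1 + 9 * δ2 - 9) ^ 2 ≤ 2 * (41 * δ1 + 96) ^ 2 + 2 * (41 * δ2 - 85) ^ 2 := by
      nlinarith [hDZ]
    -- x2 ≥ -1/4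
    obtain ⟨r, hrdef⟩ : ∃ r : ℝ, r = Real.sqrt (B^2 - 480*A) := ⟨_, rfl⟩
    have hr2 : r^2 = B^2 - 480*A := by rw [hrdef]; exact Real.sq_sqrt hD
    have hr0 : 0 ≤ r := by rw [hrdef]; exact Real.sqrt_nonneg _
    have hrc2 : ((r:ℝ):ℂ)^2 = ((B:ℝ):ℂ)^2 - 480*((A:ℝ):ℂ) := by exact_mod_cast hr2
    have hQx2 : A*((-B-r)/(2*A))^2 + B*((-B-r)/(2*A)) + 120 = 0 := by
      have hprod : ((-B-r)/(2*A))*(2*A) = -B-r := by field_simp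
      have h0 : 4*A*(A*((-B-r)/(2*A))^2 + B*((-B-r)/(2*A)) + 120) = 0 := by
        have hsq : (2*A*((-B-r)/(2*A)) + B)^2 = r^2 := by
          rw [show 2*A*((-B-r)/(2*A)) + B = -r by field_simp; ring]
          ring
        linear_combination hsq + hr2
      have := mul_eq_zero.mp h0
      rcases this with h | h
      · nlinarith [hApos]
      · exact h
    have hx2 : -(1/4 : ℝ) ≤ (-B-r)/(2*A) := by
      by_contra hcon
      push_neg at hcon
      obtain ⟨x2, hx2def⟩ : ∃ x2 : ℝ, x2 = (-B-r)/(2*A) := ⟨_, rfl⟩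
      have hQx2' : A*x2^2 + B*x2 + 120 = 0 := by rw [hx2def]; exact hQx2
      have hc : 0 < -(4*x2+1) := by rw [hx2def]; linarith
      obtain ⟨t, htdef⟩ : ∃ t : ℝ, t = Real.sqrt (-(4*x2+1)) / 2 := ⟨_, rfl⟩
      have ht2 : t^2 = -(4*x2+1)/4 := by
        rw [htdef, div_pow, Real.sq_sqrt hc.le]; norm_num
      have htpos : 0 < t := by
        rw [htdef]
        have := Real.sqrt_pos.mpr hc
        linarith
      obtain ⟨z, hzdef⟩ : ∃ z : ℂ, z = -(1/2:ℂ) + ((t:ℝ):ℂ)*Complex.I := ⟨_, rfl⟩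
      have htc : ((t:ℝ):ℂ)^2 = -(4*((x2:ℝ):ℂ)+1)/4 := by exact_mod_cast ht2
      have hz2 : z^2 + z = ((x2:ℝ):ℂ) := by
        rw [hzdef]
        linear_combination ((t:ℝ):ℂ)^2 * Complex.I_sq - htc
      have hQx2c : ((A:ℝ):ℂ)*((x2:ℝ):ℂ)^2 + ((B:ℝ):ℂ)*((x2:ℝ):ℂ) + 120 = 0 := by
        exact_mod_cast congrArg (fun y : ℝ => (y : ℂ)) hQx2'
      have hzim : z.im = 0 := by
        apply H z
        rw [hz2, ← hAc, ← hBc, hQx2c, mul_zero]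
      have : z.im = t := by
        rw [hzdef]
        simp only [Complex.add_im, Complex.mul_im, Complex.I_im, Complex.I_re, Complex.ofReal_im,
          Complex.ofReal_re, Complex.neg_im, Complex.div_im]
        norm_num
      rw [this] at hzim
      exact absurd hzim (ne_of_gt htpos)
    -- linear consequences
    have hprod : ((-B-r)/(2*A))*(2*A) = -B-r := by field_simp
    have hsum : -B - r ≥ -(A/2) := by nlinarith [hx2, hApos, hprod]
    have hZ1 : 7*δ1 + 23 ≤ δ2 := by
      have hr' : (0:ℝ) ≤ 5*(δ2:ℝ) - 35*(δ1:ℝ) - 115 := by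
        rw [hAdef, hBdef] at hsum; linarith [hr0, hsum]
      have : (0:ℤ) ≤ 5*δ2 - 35*δ1 - 115 := by exact_mod_cast hr'
      omega
    have hZ2 : 71 * δ1 ≤ 9 * δ2 + 1689 := by
      have hsq : r^2 ≤ (A/2 - B)^2 := by nlinarith [hsum, hr0]
      have h4B : (0:ℝ) ≤ A - 4*B + 1920 := by
        rw [hr2] at hsq; nlinarith [hApos, hsq]
      have : (0:ℝ) ≤ 1689 - 71*(δ1:ℝ) + 9*(δ2:ℝ) := by
        rw [hAdef, hBdef] at h4B; linarith
      have : (0:ℤ) ≤ 1689 - 71*δ1 + 9*δ2 := by exact_mod_cast this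
      omega
    by_cases hcase : δ2 = 7*δ1 + 23
    · -- forces the special point
      have hAB0 : A - 2*B = 0 := by
        rw [hAdef, hBdef]
        have : (δ2:ℝ) = 7*(δ1:ℝ) + 23 := by exact_mod_cast hcase
        linarith [this]
      have hreq : r = 0 := le_antisymm (by linarith [hsum, hAB0]) hr0
      have hD0 : (58+18*δ1-2*δ2)^2 - 480*(1+δ1+δ2) = 0 := by
        have : B^2 - 480*A = 0 := by rw [← hr2, hreq]; ring
        rw [hAdef, hBdef] at this
        exact_mod_cast this
      have e1 : δ2 - (7*δ1+23) = 0 := by omega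
      have h16 : 16*((δ1+3)*(δ1-237)) = 0 := by
        linear_combination hD0 + (-4*δ2+44*δ1+620)*e1
      have := mul_eq_zero.mp h16
      rcases this with h | h
      · norm_num at h
      rcases mul_eq_zero.mp h with h | h
      · exfalso; omega
      · left; omega
    · right
      exact ⟨by omega, hZ2, hC3⟩
  · -- conditions → real-rooted
    rintro (⟨h1, h2⟩ | ⟨h1, h2, h3⟩) z hz
    · subst h1; subst h2
      push_cast at hz
      have h5 : (2*z+1)^5 = 0 := by linear_combination hz/120
      exact im_of_neg_half z (pow_eq_zero_iff (by norm_num : (5:ℕ) ≠ 0) |>.mp h5)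
    · have h1r : 7*(δ1:ℝ)+24 ≤ (δ2:ℝ) := by exact_mod_cast (by omega : 7*δ1+24 ≤ δ2)
      have h2r : 71*(δ1:ℝ) ≤ 9*(δ2:ℝ)+1689 := by exact_mod_cast h2
      have hAB : 0 < A - 2*B := by rw [hAdef, hBdef]; linarith
      have hQ4 : (0:ℝ) ≤ A - 4*B + 1920 := by rw [hAdef, hBdef]; linarith
      have hD : (0:ℝ) ≤ B^2 - 480*A := by
        have h3r : 41*((δ1:ℝ)+9*δ2-9)^2 ≤ 2*(41*(δ1:ℝ)+96)^2 + 2*(41*(δ2:ℝ)-85)^2 := by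
          exact_mod_cast h3
        rw [hAdef, hBdef]; nlinarith [h3r]
      obtain ⟨r, hrdef⟩ : ∃ r : ℝ, r = Real.sqrt (B^2 - 480*A) := ⟨_, rfl⟩
      have hr2 : r^2 = B^2 - 480*A := by rw [hrdef]; exact Real.sq_sqrt hD
      have hr0 : 0 ≤ r := by rw [hrdef]; exact Real.sqrt_nonneg _
      have hrc2 : ((r:ℝ):ℂ)^2 = ((B:ℝ):ℂ)^2 - 480*((A:ℝ):ℂ) := by exact_mod_cast hr2
      have hrle : r ≤ A/2 - B := by
        rw [hrdef]
        calc Real.sqrt (B^2 - 480*A) ≤ Real.sqrt ((A/2 - B)^2) :=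
              Real.sqrt_le_sqrt (by nlinarith [mul_nonneg hApos.le hQ4])
          _ = A/2 - B := Real.sqrt_sq (by linarith)
      have hx2 : -(1/4:ℝ) ≤ (-B-r)/(2*A) := by
        rw [le_div_iff₀ (by positivity : (0:ℝ) < 2*A)]
        linarith
      have hx1 : -(1/4:ℝ) ≤ (-B+r)/(2*A) := by
        rw [le_div_iff₀ (by positivity : (0:ℝ) < 2*A)]
        linarith
      rcases mul_eq_zero.mp hz with h0 | hQ
      · exact im_of_neg_half z h0
      · rw [← hAc, ← hBc] at hQ
        have key : (2*((A:ℝ):ℂ)*(z^2+z) + ((B:ℝ):ℂ) - ((r:ℝ):ℂ))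
            * (2*((A:ℝ):ℂ)*(z^2+z) + ((B:ℝ):ℂ) + ((r:ℝ):ℂ)) = 0 := by
          linear_combination 4*((A:ℝ):ℂ)*hQ - hrc2
        rcases mul_eq_zero.mp key with hk | hk
        · apply root_real_of ((-B+r)/(2*A)) hx1 z
          push_cast
          rw [eq_div_iff h2A0]
          linear_combination hk
        · apply root_real_of ((-B-r)/(2*A)) hx2 z
          push_cast
          rw [eq_div_iff h2A0]
          linear_combination hk

lemma Lexp_map_eval (δ1 δ2 : ℤ) (z : ℂ) :
    ((Lexp δ1 δ2).map (algebraMap ℚ ℂ)).eval z =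
    (1/120) * ((2*z+1) * ((1+(δ1:ℂ)+(δ2:ℂ))*(z^2+z)^2 + (58+18*(δ1:ℂ)-2*(δ2:ℂ))*(z^2+z) + 120)) := by
  simp only [Lexp, Polynomial.map_add, Polynomial.map_mul, Polynomial.map_pow, map_C, map_X,
    eval_add, eval_mul, eval_pow, eval_C, eval_X, eq_ratCast]
  push_cast
  ring

lemma Lexp_map_ne (δ1 δ2 : ℤ) : (Lexp δ1 δ2).map (algebraMap ℚ ℂ) ≠ 0 := by
  intro h
  have h0 := Lexp_map_eval δ1 δ2 0
  rw [h] at h0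
  simp at h0

lemma realrooted_iff (L : Polynomial ℚ) (δ1 δ2 : ℤ) (hLeq : L = Lexp δ1 δ2) :
    IsRealRooted L ↔
    (∀ z : ℂ, (2*z+1) * ((1+(δ1:ℂ)+(δ2:ℂ))*(z^2+z)^2 + (58+18*(δ1:ℂ)-2*(δ2:ℂ))*(z^2+z) + 120) = 0
      → z.im = 0) := by
  unfold IsRealRooted cRoots
  rw [hLeq]
  constructor
  · intro h z hz
    apply h z
    rw [Polynomial.mem_roots']
    refine ⟨Lexp_map_ne δ1 δ2, ?_⟩
    show _ = 0
    rw [Lexp_map_eval, hz, mul_zero]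
  · intro h z hz
    rw [Polynomial.mem_roots'] at hz
    have h2 := hz.2
    rw [Polynomial.IsRoot, Lexp_map_eval] at h2
    rcases mul_eq_zero.mp h2 with h3 | h3
    · norm_num at h3
    · exact h z h3

theorem statement13 (P : Set (Fin 5 → ℝ)) (L : Polynomial ℚ) (δ1 δ2 : ℤ)
    (hP : IsLatticePolytope 5 P) (hdim : IsFullDim 5 P) (href : IsReflexive 5 P)
    (hL : IsEhrhart 5 P L) (hδ : HasDeltaVector 5 L ![1, δ1, δ2, δ2, δ1, 1]) :
    IsRealRooted L ↔
      (δ1 = 237 ∧ δ2 = 1682) ∨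
      (δ2 > 7 * δ1 + 23 ∧ 71 * δ1 ≤ 9 * δ2 + 1689 ∧
        41 * (δ1 + 9 * δ2 - 9) ^ 2 ≤ 2 * (41 * δ1 + 96) ^ 2 + 2 * (41 * δ2 - 85) ^ 2) := by
  have hLeq : L = Lexp δ1 δ2 := L_eq L δ1 δ2 hδ
  have hA : 0 < 1 + δ1 + δ2 := delta_pos P L δ1 δ2 hP href.1 hL hLeq
  rw [realrooted_iff L δ1 δ2 hLeq]
  exact main_alg δ1 δ2 hA
end
end

section
/- Let P ⊂ ℝ^d be a d-dimensional CL-polytope that is reflexive, with 2 ≤ d ≤ 7. Then |P ∩ ℤ^d| ≤ 3^d. -/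
open Pointwise MeasureTheory Polynomial

noncomputable section

namespace Statement18Helpers

open Filter

lemma natDegree_le_of_growth {p : Polynomial ℝ} {d : ℕ} {Cb : ℝ}
    (h : ∀ m : ℕ, 1 ≤ m → |p.eval (m:ℝ)| ≤ Cb * (m:ℝ)^d) : p.natDegree ≤ d := by
  by_contra hlt
  push_neg at hlt
  have hp0 : p ≠ 0 := by rintro rfl; simp at hlt
  have hdlt : (Polynomial.C Cb * Polynomial.X ^ d).degree < p.degree := by
    calc (Polynomial.C Cb * Polynomial.X ^ d).degree ≤ (d : WithBot ℕ) :=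
          Polynomial.degree_C_mul_X_pow_le d Cb
      _ < p.degree := by
          rw [Polynomial.degree_eq_natDegree hp0]
          exact_mod_cast hlt
  have hdpos : 0 < p.degree := by
    rw [Polynomial.degree_eq_natDegree hp0]
    exact_mod_cast Nat.lt_of_lt_of_le (Nat.zero_lt_succ d) hlt
  have hlc : p.leadingCoeff ≠ 0 := Polynomial.leadingCoeff_ne_zero.mpr hp0
  rcases hlc.lt_or_gt with hneg | hpos
  · set q := Polynomial.C Cb * Polynomial.X ^ d + p with hq
    have hqdeg : q.degree = p.degree := Polynomial.degree_add_eq_right_of_degree_lt hdlt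
    have hqlc : q.leadingCoeff = p.leadingCoeff := Polynomial.leadingCoeff_add_of_degree_lt hdlt
    have ht : Tendsto (fun x => Polynomial.eval x q) atTop atBot :=
      Polynomial.tendsto_atBot_of_leadingCoeff_nonpos q (hqdeg ▸ hdpos) (hqlc ▸ hneg.le)
    obtain ⟨x0, hx0⟩ := eventually_atTop.mp (ht.eventually (eventually_lt_atBot 0))
    set m : ℕ := ⌈x0⌉₊ + 1 with hm
    have hm1 : 1 ≤ m := Nat.le_add_left 1 _
    have hmx : x0 ≤ (m : ℝ) := (Nat.le_ceil x0).trans (by rw [hm]; push_cast; linarith)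
    have hev := hx0 (m : ℝ) hmx
    have hb := h m hm1
    simp only [hq, Polynomial.eval_add, Polynomial.eval_mul, Polynomial.eval_C,
      Polynomial.eval_pow, Polynomial.eval_X] at hev
    have := abs_le.mp hb
    linarith [this.1]
  · set q := Polynomial.C (-Cb) * Polynomial.X ^ d + p with hq
    have hdlt' : (Polynomial.C (-Cb) * Polynomial.X ^ d).degree < p.degree := by
      calc (Polynomial.C (-Cb) * Polynomial.X ^ d).degree ≤ (d : WithBot ℕ) :=
            Polynomial.degree_C_mul_X_pow_le d (-Cb)
        _ < p.degree := by
            rw [Polynomial.degree_eq_natDegree hp0]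
            exact_mod_cast hlt
    have hqdeg : q.degree = p.degree := Polynomial.degree_add_eq_right_of_degree_lt hdlt'
    have hqlc : q.leadingCoeff = p.leadingCoeff := Polynomial.leadingCoeff_add_of_degree_lt hdlt'
    have ht : Tendsto (fun x => Polynomial.eval x q) atTop atTop :=
      Polynomial.tendsto_atTop_of_leadingCoeff_nonneg q (hqdeg ▸ hdpos) (hqlc ▸ hpos.le)
    obtain ⟨x0, hx0⟩ := eventually_atTop.mp (ht.eventually (eventually_gt_atTop 0))
    set m : ℕ := ⌈x0⌉₊ + 1 with hm
    have hm1 : 1 ≤ m := Nat.le_add_left 1 _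
    have hmx : x0 ≤ (m : ℝ) := (Nat.le_ceil x0).trans (by rw [hm]; push_cast; linarith)
    have hev := hx0 (m : ℝ) hmx
    have hb := h m hm1
    simp only [hq, Polynomial.eval_add, Polynomial.eval_mul, Polynomial.eval_C,
      Polynomial.eval_pow, Polynomial.eval_X, neg_mul] at hev
    have := abs_le.mp hb
    linarith [this.2]

lemma ncard_latticePts_le (d : ℕ) (S : Set (Fin d → ℝ)) (K : ℕ)
    (hS : ∀ x ∈ S, ∀ i, |x i| ≤ (K : ℝ)) :
    (latticePts d S).ncard ≤ (2*K+1)^d := by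
  classical
  have hsub : latticePts d S ⊆ ↑(Fintype.piFinset fun _ : Fin d => Finset.Icc (-(K:ℤ)) K) := by
    intro x hx
    simp only [Finset.coe_sort_coe, Finset.mem_coe, Fintype.mem_piFinset, Finset.mem_Icc]
    intro i
    have h1 : |((x i : ℤ) : ℝ)| ≤ (K : ℝ) := hS _ hx i
    rw [← Int.cast_abs] at h1
    have h2 : |x i| ≤ (K : ℤ) := by exact_mod_cast h1
    exact abs_le.mp h2
  calc (latticePts d S).ncard
      ≤ (↑(Fintype.piFinset fun _ : Fin d => Finset.Icc (-(K:ℤ)) K) : Set (Fin d → ℤ)).ncard :=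
        Set.ncard_le_ncard hsub (Finset.finite_toSet _)
    _ = (2*K+1)^d := by
        rw [Set.ncard_coe_finset, Fintype.card_piFinset]
        simp only [Int.card_Icc]
        rw [Finset.prod_const, Finset.card_univ, Fintype.card_fin]
        congr 1
        omega

lemma exists_box (d : ℕ) (P : Set (Fin d → ℝ)) (hP : IsLatticePolytope d P) :
    ∃ N : ℕ, 1 ≤ N ∧ ∀ x ∈ P, ∀ i, |x i| ≤ (N : ℝ) := by
  classical
  obtain ⟨V, rfl⟩ := hP
  set M := V.sup fun v => Finset.univ.sup fun i => (v i).natAbs with hM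
  refine ⟨M + 1, Nat.le_add_left 1 _, ?_⟩
  have hconv : Convex ℝ (Set.pi Set.univ fun _ : Fin d => Set.Icc (-((M+1:ℕ):ℝ)) ((M+1:ℕ):ℝ)) :=
    convex_pi fun i _ => convex_Icc _ _
  have hsub : (fun v : Fin d → ℤ => fun i => (v i : ℝ)) '' (V : Set (Fin d → ℤ)) ⊆
      Set.pi Set.univ fun _ : Fin d => Set.Icc (-((M+1:ℕ):ℝ)) ((M+1:ℕ):ℝ) := by
    rintro _ ⟨v, hv, rfl⟩
    intro i _
    rw [Set.mem_Icc, ← abs_le]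
    have h1 : (v i).natAbs ≤ M := by
      calc (v i).natAbs ≤ Finset.univ.sup fun i => (v i).natAbs :=
            Finset.le_sup (f := fun i => (v i).natAbs) (Finset.mem_univ i)
        _ ≤ M := Finset.le_sup (f := fun v => Finset.univ.sup fun i => (v i).natAbs)
            (Finset.mem_coe.mp hv)
    have h3 : ((v i).natAbs : ℝ) ≤ ((M+1:ℕ):ℝ) := by exact_mod_cast h1.trans (Nat.le_succ M)
    rw [Nat.cast_natAbs] at h3
    simpa using h3
  intro x hx i
  have h4 := convexHull_min hsub hconv hx i (Set.mem_univ i)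
  rw [Set.mem_Icc, ← abs_le] at h4
  exact h4

lemma abs_one_sub_le {z : ℂ} (hz : z.re = -(1/2 : ℝ)) :
    ‖1 - z‖ ≤ 3 * ‖z‖ := by
  have h2 : (‖1 - z‖)^2 ≤ (3 * ‖z‖)^2 := by
    rw [mul_pow, Complex.sq_norm, Complex.sq_norm]
    simp only [Complex.normSq_apply, Complex.sub_re, Complex.sub_im, Complex.one_re,
      Complex.one_im, hz]
    nlinarith [sq_nonneg z.im]
  have h0 : (0:ℝ) ≤ 3 * ‖z‖ := by positivity
  nlinarith [norm_nonneg (1 - z)]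

lemma key (L : Polynomial ℚ)
    (hCL : ∀ z ∈ cRoots L, z.re = -(1/2 : ℝ)) :
    ((|L.eval 1| : ℚ) : ℝ) ≤ 3 ^ L.natDegree * ((|L.eval 0| : ℚ) : ℝ) := by
  classical
  set ι := algebraMap ℚ ℂ with hι
  have habs : ∀ x : ℚ, ‖ι x‖ = ((|x| : ℚ) : ℝ) := by
    intro x
    rw [hι, show (algebraMap ℚ ℂ) x = ((x:ℚ):ℂ) from eq_ratCast _ x,
      ← Complex.ofReal_ratCast, Complex.norm_real, Real.norm_eq_abs, Rat.cast_abs]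
  have hsplit : (L.map ι).Splits := IsAlgClosed.splits (L.map ι)
  have hcard : Multiset.card (cRoots L) = L.natDegree := by
    have h := (Polynomial.splits_iff_card_roots).mp (IsAlgClosed.splits (L.map ι))
    rwa [Polynomial.natDegree_map] at h
  have hfac := by have := hsplit.eq_prod_roots; rwa [Polynomial.leadingCoeff_map] at this
  have he1 : ι (L.eval 1) = ι L.leadingCoeff * ((cRoots L).map fun a => 1 - a).prod := by
    conv_lhs => rw [← Polynomial.eval_one_map ι L, hfac]
    simp [Polynomial.eval_multiset_prod, Multiset.map_map, Function.comp, cRoots, hι]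
  have he0 : ι (L.eval 0) = ι L.leadingCoeff * ((cRoots L).map fun a => -a).prod := by
    conv_lhs => rw [← Polynomial.eval_zero_map ι L, hfac]
    simp [Polynomial.eval_multiset_prod, Multiset.map_map, Function.comp, cRoots, hι]
  have ha1 : ((|L.eval 1| : ℚ) : ℝ) =
      ‖ι L.leadingCoeff‖ * ((cRoots L).map fun a => ‖1 - a‖).prod := by
    have := congrArg (‖·‖) he1
    rw [norm_mul, show ∀ s : Multiset ℂ, ‖s.prod‖ = (s.map (‖·‖)).prod from fun s => map_multiset_prod (normHom : ℂ →*₀ ℝ) s, Multiset.map_map, habs] at this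
    exact this
  have ha0 : ((|L.eval 0| : ℚ) : ℝ) =
      ‖ι L.leadingCoeff‖ * ((cRoots L).map fun a => ‖a‖).prod := by
    have := congrArg (‖·‖) he0
    rw [norm_mul, show ∀ s : Multiset ℂ, ‖s.prod‖ = (s.map (‖·‖)).prod from fun s => map_multiset_prod (normHom : ℂ →*₀ ℝ) s, Multiset.map_map, habs] at this
    simpa using this
  rw [ha1, ha0]
  have hle : ((cRoots L).map fun a => ‖1 - a‖).prod ≤
      ((cRoots L).map fun a => 3 * ‖a‖).prod :=
    Multiset.prod_map_le_prod_map₀ _ _ (fun a _ => norm_nonneg _)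
      (fun a ha => abs_one_sub_le (hCL a ha))
  have hsplitprod : ((cRoots L).map fun a => 3 * ‖a‖).prod =
      3 ^ L.natDegree * ((cRoots L).map fun a => ‖a‖).prod := by
    rw [show (fun a : ℂ => 3 * ‖a‖) = fun a => (fun _ => (3:ℝ)) a * ‖a‖
        from rfl,
      Multiset.prod_map_mul, Multiset.map_const', Multiset.prod_replicate, hcard]
  calc ‖ι L.leadingCoeff‖ * ((cRoots L).map fun a => ‖1 - a‖).prod
      ≤ ‖ι L.leadingCoeff‖ * ((cRoots L).map fun a => 3 * ‖a‖).prod :=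
        mul_le_mul_of_nonneg_left hle (norm_nonneg _)
    _ = 3 ^ L.natDegree * (‖ι L.leadingCoeff‖ *
          ((cRoots L).map fun a => ‖a‖).prod) := by rw [hsplitprod]; ring

end Statement18Helpers

open Statement18Helpers in
theorem statement18 (d : ℕ) (hd2 : 2 ≤ d) (hd7 : d ≤ 7) (P : Set (Fin d → ℝ))
    (L : Polynomial ℚ) (hP : IsLatticePolytope d P) (hdim : IsFullDim d P)
    (href : IsReflexive d P) (hL : IsEhrhart d P L) (hCL : IsCL L) :
    (latticePts d P).ncard ≤ 3 ^ d := by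
  classical
  obtain ⟨h0int, -⟩ := href
  have h0P : (0 : Fin d → ℝ) ∈ P := interior_subset h0int
  have hPne : P.Nonempty := ⟨0, h0P⟩
  -- L(0) = 1
  have hL0 : L.eval 0 = 1 := by
    have h := hL 0
    rw [Nat.cast_zero, Nat.cast_zero] at h
    rw [h, Set.zero_smul_set hPne]
    have hset : latticePts d (0 : Set (Fin d → ℝ)) = {0} := by
      ext x
      simp only [latticePts, Set.mem_setOf_eq, Set.mem_zero, Set.mem_singleton_iff]
      constructor
      · intro hx
        funext i
        have h5 := congrFun hx i
        simp only [Pi.zero_apply] at h5 ⊢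
        exact_mod_cast h5
      · rintro rfl
        funext i
        simp
    rw [hset, Set.ncard_singleton]
    norm_num
  -- L(1) = |P ∩ ℤ^d|
  have hL1 : L.eval 1 = ((latticePts d P).ncard : ℚ) := by
    have h := hL 1
    rw [Nat.cast_one, Nat.cast_one, one_smul] at h
    exact h
  -- bounding box and growth bound
  obtain ⟨N, hN1, hbox⟩ := exists_box d P hP
  set p : Polynomial ℝ := L.map (algebraMap ℚ ℝ) with hp
  have hgrow : ∀ m : ℕ, 1 ≤ m → |p.eval (m:ℝ)| ≤ (((3*N)^d : ℕ) : ℝ) * (m:ℝ)^d := by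
    intro m hm
    have hev : p.eval (m:ℝ) = ((L.eval (m:ℚ) : ℚ) : ℝ) := by
      rw [hp]
      rw [show ((m:ℕ):ℝ) = algebraMap ℚ ℝ ((m:ℕ):ℚ) by push_cast; simp [eq_ratCast]]
      rw [Polynomial.eval_map_algebraMap, Polynomial.aeval_algebraMap_apply]
      simp [eq_ratCast]
    have hbound : ∀ x ∈ (m:ℝ) • P, ∀ i, |x i| ≤ ((m*N : ℕ) : ℝ) := by
      intro x hx i
      obtain ⟨y, hy, rfl⟩ := hx
      have h1 : |y i| ≤ (N:ℝ) := hbox y hy i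
      show |(m:ℝ) * y i| ≤ ((m*N : ℕ) : ℝ)
      rw [abs_mul, abs_of_nonneg (by positivity : (0:ℝ) ≤ (m:ℝ))]
      push_cast
      exact mul_le_mul_of_nonneg_left h1 (by positivity)
    have hcount := ncard_latticePts_le d ((m:ℝ) • P) (m*N) hbound
    have hLm := hL m
    have hcast : |p.eval (m:ℝ)| = ((latticePts d ((m:ℝ) • P)).ncard : ℝ) := by
      rw [hev, hLm]
      rw [abs_of_nonneg (by positivity : (0:ℝ) ≤ (((latticePts d ((m:ℝ) • P)).ncard : ℚ) : ℝ))]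
      push_cast
      ring
    rw [hcast]
    have hmn : 1 ≤ m * N := Nat.one_le_iff_ne_zero.mpr (Nat.mul_ne_zero (by omega) (by omega))
    have hstep : 2*(m*N)+1 ≤ 3*N*m := by nlinarith
    have hnat : (latticePts d ((m:ℝ) • P)).ncard ≤ (3*N)^d * m^d := by
      calc (latticePts d ((m:ℝ) • P)).ncard ≤ (2*(m*N)+1)^d := hcount
        _ ≤ (3*N*m)^d := Nat.pow_le_pow_left hstep d
        _ = (3*N)^d * m^d := by rw [mul_pow]
    calc ((latticePts d ((m:ℝ) • P)).ncard : ℝ) ≤ (((3*N)^d * m^d : ℕ) : ℝ) := by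
          exact_mod_cast hnat
      _ = (((3*N)^d : ℕ) : ℝ) * (m:ℝ)^d := by push_cast; ring
  have hdeg : L.natDegree ≤ d := by
    have h := natDegree_le_of_growth hgrow
    rwa [hp, Polynomial.natDegree_map] at h
  -- root bound
  have hkey := key L hCL
  rw [hL0, hL1] at hkey
  have h1 : |((latticePts d P).ncard : ℚ)| = ((latticePts d P).ncard : ℚ) :=
    abs_of_nonneg (by positivity)
  rw [h1] at hkey
  simp only [abs_one, Rat.cast_one, mul_one, Rat.cast_natCast] at hkey
  have h3 : (3:ℝ) ^ L.natDegree ≤ 3 ^ d := pow_le_pow_right₀ (by norm_num) hdeg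
  have hfin : ((latticePts d P).ncard : ℝ) ≤ ((3^d : ℕ) : ℝ) := by
    push_cast
    linarith
  exact_mod_cast hfin
end
end
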